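/- arXiv:1702.00111 — 2 statements merged into one kernel-verified Lean document; each statement's English description precedes it below -/
import Mathlib

section
/- For i.i.d. standard normal random variables Y_1,...,Y_n with maximum Y_(n), taking b_n = Φ^{-1}(1 - 1/n) and a_n = 1/(n φ(b_n)), one has lim_{n→∞} [Φ(a_n x + b_n)]^n = exp(-e^{-x}) for every real x. -/
open MeasureTheory ProbabilityTheory Filter Real

noncomputable def Phi (x : ℝ) : ℝ := ((gaussianReal 0 1) (Set.Iic x)).toReal

noncomputable def stdphi (x : ℝ) : ℝ := gaussianPDFReal 0 1 x

noncomputable def PhiInv (p : ℝ) : ℝ := Function.invFun Phi p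

/-!
Mills' ratio `1 - Φ t ~ φ t / t` follows from the bounds `φ t (1/t - 1/t³) ≤ 1 - Φ t ≤ φ t / t`,
each holding because the difference of its two sides tends to `0` at `∞` and has derivative
`-φ t / t²`, resp. `-3 φ t / t⁴`. Since `Φ b_n = 1 - 1/n`,
Mills' ratio gives `b_n a_n → 1`, and then `φ (a_n x + b_n) = φ b_n · e^{-b_n a_n x - (a_n x)²/2}`
yields `n (1 - Φ (a_n x + b_n)) → e^{-x}`. Finally `(1 - c_n/n)^n → e^{-c}` whenever `c_n → c`.
-/

open Topology

lemma stdphi_eq (x : ℝ) : stdphi x = (√(2 * π))⁻¹ * exp (-x ^ 2 / 2) := by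
  simp [stdphi, gaussianPDFReal]

lemma stdphi_pos (x : ℝ) : 0 < stdphi x := gaussianPDFReal_pos 0 1 x one_ne_zero

lemma stdphi_add (b e : ℝ) : stdphi (b + e) = stdphi b * exp (-(b * e) - e ^ 2 / 2) := by
  rw [stdphi_eq, stdphi_eq, mul_assoc, ← exp_add]
  congr 2
  ring

lemma hasDerivAt_stdphi (x : ℝ) : HasDerivAt stdphi (-x * stdphi x) x := by
  rw [show stdphi = fun y => (√(2 * π))⁻¹ * exp (-y ^ 2 / 2) from funext stdphi_eq]
  refine ((((hasDerivAt_pow 2 x).neg.div_const 2).exp).const_mul _).congr_deriv ?_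
  simp only [Pi.neg_apply]
  push_cast
  ring

lemma continuous_stdphi : Continuous stdphi :=
  continuous_iff_continuousAt.2 fun x => (hasDerivAt_stdphi x).continuousAt

lemma tendsto_stdphi_atTop : Tendsto stdphi atTop (𝓝 0) := by
  have hsq : Tendsto (fun y : ℝ => -y ^ 2 / 2) atTop atBot :=
    (tendsto_neg_atTop_atBot.comp (tendsto_pow_atTop two_ne_zero)).atBot_div_const two_pos
  rw [show stdphi = fun y => (√(2 * π))⁻¹ * exp (-y ^ 2 / 2) from funext stdphi_eq]
  simpa using (tendsto_exp_atBot.comp hsq).const_mul (√(2 * π))⁻¹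

lemma Phi_eq_cdf : Phi = cdf (gaussianReal 0 1) :=
  funext fun x => (cdf_eq_real _ x).symm

lemma Phi_sub_Phi (a b : ℝ) : Phi b - Phi a = ∫ t in a..b, stdphi t := by
  have hint : Integrable stdphi := integrable_gaussianPDFReal 0 1
  have hPhi (x : ℝ) : Phi x = ∫ t in Set.Iic x, stdphi t := by
    rw [Phi, gaussianReal_apply_eq_integral 0 one_ne_zero, ENNReal.toReal_ofReal]
    · rfl
    · exact setIntegral_nonneg measurableSet_Iic fun t _ => gaussianPDFReal_nonneg 0 1 t
  rw [hPhi, hPhi]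
  exact intervalIntegral.integral_Iic_sub_Iic hint.integrableOn hint.integrableOn

lemma hasDerivAt_Phi (x : ℝ) : HasDerivAt Phi (stdphi x) x := by
  have h : Phi = fun y => Phi 0 + ∫ t in (0 : ℝ)..y, stdphi t :=
    funext fun y => by rw [← Phi_sub_Phi]; ring
  rw [h]
  exact (continuous_stdphi.integral_hasStrictDerivAt 0 x).hasDerivAt.const_add _

lemma continuous_Phi : Continuous Phi :=
  continuous_iff_continuousAt.2 fun x => (hasDerivAt_Phi x).continuousAt

lemma strictMono_Phi : StrictMono Phi :=
  strictMono_of_hasDerivAt_pos hasDerivAt_Phi stdphi_pos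

lemma tendsto_Phi_atTop : Tendsto Phi atTop (𝓝 1) := Phi_eq_cdf ▸ tendsto_cdf_atTop _

lemma tendsto_Phi_atBot : Tendsto Phi atBot (𝓝 0) := Phi_eq_cdf ▸ tendsto_cdf_atBot _

lemma Phi_lt_one (x : ℝ) : Phi x < 1 :=
  (strictMono_Phi (lt_add_one x)).trans_le (Phi_eq_cdf ▸ cdf_le_one _ _)

lemma Phi_PhiInv {p : ℝ} (h0 : 0 < p) (h1 : p < 1) : Phi (PhiInv p) = p := by
  obtain ⟨a, ha⟩ := (tendsto_Phi_atBot.eventually_lt_const h0).exists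
  obtain ⟨b, hb⟩ := (tendsto_Phi_atTop.eventually_const_lt h1).exists
  exact Function.invFun_eq (intermediate_value_univ a b continuous_Phi ⟨ha.le, hb.le⟩)

lemma tendsto_atTop_of_tendsto_Phi {α : Type*} {l : Filter α} {f : α → ℝ}
    (hf : Tendsto (fun i => Phi (f i)) l (𝓝 1)) : Tendsto f l atTop :=
  tendsto_atTop.2 fun M =>
    (hf.eventually_const_lt (Phi_lt_one M)).mono fun _ h => (strictMono_Phi.lt_iff_lt.1 h).le

lemma nonneg_of_hasDerivAt_nonpos_of_tendsto_zero {f f' : ℝ → ℝ} {t : ℝ}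
    (hf : ∀ s, t ≤ s → HasDerivAt f (f' s) s) (hf' : ∀ s, t ≤ s → f' s ≤ 0)
    (hlim : Tendsto f atTop (𝓝 0)) : 0 ≤ f t := by
  have hanti : AntitoneOn f (Set.Ici t) := by
    refine antitoneOn_of_hasDerivWithinAt_nonpos (f' := f') (convex_Ici t)
      (fun s hs => (hf s hs).continuousAt.continuousWithinAt) (fun s hs => ?_) (fun s hs => ?_)
    all_goals rw [interior_Ici] at hs
    · exact (hf s (le_of_lt hs)).hasDerivWithinAt
    · exact hf' s (le_of_lt hs)
  exact le_of_tendsto hlim ((eventually_ge_atTop t).mono fun s hs =>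
    hanti Set.self_mem_Ici hs hs)

lemma one_sub_Phi_le {t : ℝ} (ht : 0 < t) : 1 - Phi t ≤ stdphi t / t := by
  suffices 0 ≤ stdphi t / t - (1 - Phi t) by linarith
  refine nonneg_of_hasDerivAt_nonpos_of_tendsto_zero (f := fun s => stdphi s / s - (1 - Phi s))
    (f' := fun s => -(stdphi s / s ^ 2))
    (fun s hs => ?_) (fun s _ => ?_) ?_
  · have hs : s ≠ 0 := (ht.trans_le hs).ne'
    refine (((hasDerivAt_stdphi s).div (hasDerivAt_id s) hs).sub
      ((hasDerivAt_Phi s).const_sub 1)).congr_deriv ?_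
    simp only [id]
    field_simp
    ring
  · exact neg_nonpos.2 (div_nonneg (stdphi_pos s).le (sq_nonneg s))
  · simpa using (tendsto_stdphi_atTop.div_atTop tendsto_id).sub (tendsto_Phi_atTop.const_sub 1)

lemma le_one_sub_Phi {t : ℝ} (ht : 0 < t) : stdphi t * (t⁻¹ - t⁻¹ ^ 3) ≤ 1 - Phi t := by
  suffices 0 ≤ (1 - Phi t) - stdphi t * (t⁻¹ - t⁻¹ ^ 3) by linarith
  refine nonneg_of_hasDerivAt_nonpos_of_tendsto_zero
    (f := fun s => (1 - Phi s) - stdphi s * (s⁻¹ - s⁻¹ ^ 3)) (f' := fun s => -(3 * stdphi s / s ^ 4))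
    (fun s hs => ?_) (fun s _ => ?_) ?_
  · have hs : s ≠ 0 := (ht.trans_le hs).ne'
    have hinv := hasDerivAt_inv hs
    refine (((hasDerivAt_Phi s).const_sub 1).sub
      ((hasDerivAt_stdphi s).mul (hinv.sub (hinv.pow 3)))).congr_deriv ?_
    simp only [Pi.sub_apply, Pi.pow_apply]
    push_cast
    field_simp
    ring
  · exact neg_nonpos.2 (div_nonneg (mul_nonneg zero_le_three (stdphi_pos s).le) (by positivity))
  · have hpoly : Tendsto (fun s : ℝ => s⁻¹ - s⁻¹ ^ 3) atTop (𝓝 0) := by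
      simpa using tendsto_inv_atTop_zero.sub (tendsto_inv_atTop_zero.pow 3 : Tendsto (fun s : ℝ => s⁻¹ ^ 3) _ _)
    simpa using (tendsto_Phi_atTop.const_sub 1).sub (tendsto_stdphi_atTop.mul hpoly)

lemma tendsto_mul_one_sub_Phi_div_stdphi :
    Tendsto (fun t => t * (1 - Phi t) / stdphi t) atTop (𝓝 1) := by
  have hlow : Tendsto (fun t : ℝ => 1 - t⁻¹ ^ 2) atTop (𝓝 1) := by
    simpa using (tendsto_inv_atTop_zero.pow 2).const_sub (1 : ℝ)
  refine tendsto_of_tendsto_of_tendsto_of_le_of_le' hlow tendsto_const_nhds ?_ ?_ <;>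
    filter_upwards [eventually_gt_atTop 0] with t ht
  · rw [le_div_iff₀ (stdphi_pos t)]
    calc (1 - t⁻¹ ^ 2) * stdphi t = t * (stdphi t * (t⁻¹ - t⁻¹ ^ 3)) := by field_simp
      _ ≤ t * (1 - Phi t) := mul_le_mul_of_nonneg_left (le_one_sub_Phi ht) ht.le
  · rw [div_le_one (stdphi_pos t)]
    calc t * (1 - Phi t) ≤ t * (stdphi t / t) :=
          mul_le_mul_of_nonneg_left (one_sub_Phi_le ht) ht.le
      _ = stdphi t := mul_div_cancel₀ _ ht.ne'

lemma tendsto_nat_mul_one_sub_Phi_affine {a b : ℕ → ℝ} (x : ℝ) (hb : Tendsto b atTop atTop)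
    (hab : Tendsto (fun n => b n * a n) atTop (𝓝 1))
    (hnorm : ∀ᶠ n : ℕ in atTop, n * stdphi (b n) * a n = 1) :
    Tendsto (fun n : ℕ => n * (1 - Phi (a n * x + b n))) atTop (𝓝 (exp (-x))) := by
  have ha : Tendsto a atTop (𝓝 0) := (hab.div_atTop hb).congr' <| by
    filter_upwards [hb.eventually_gt_atTop 0] with n hn
    field_simp
  have hu : Tendsto (fun n => a n * x + b n) atTop atTop := (ha.mul_const x).add_atTop hb
  have hdens : Tendsto (fun n : ℕ => n * stdphi (a n * x + b n) / (a n * x + b n)) atTop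
      (𝓝 (exp (-x))) := by
    have hE := ((continuous_exp.tendsto _).comp (((hab.mul_const x).neg).sub
      (((ha.mul_const x).pow 2).div_const 2))).div (((ha.pow 2).mul_const x).add hab)
      (by norm_num)
    rw [show exp (-(1 * x) - (0 * x) ^ 2 / 2) / (0 ^ 2 * x + 1) = exp (-x) by norm_num] at hE
    -- `n φ(b_n) = 1 / a_n` cancels the prefactor, leaving `e^{-b_n a_n x - (a_n x)²/2} / (a_n u_n)`
    refine hE.congr' ?_
    filter_upwards [hnorm, hu.eventually_gt_atTop 0] with n hn hun
    have han : a n ≠ 0 := by rintro h; simp [h] at hn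
    have hau : a n ^ 2 * x + b n * a n ≠ 0 := by
      rw [show a n ^ 2 * x + b n * a n = a n * (a n * x + b n) by ring]
      exact mul_ne_zero han hun.ne'
    rw [Pi.div_apply, Function.comp_apply, show a n * x + b n = b n + a n * x by ring, stdphi_add,
      show b n * (a n * x) = b n * a n * x by ring, div_eq_div_iff hau (by linarith)]
    linear_combination (-exp (-(b n * a n * x) - (a n * x) ^ 2 / 2) * (b n + a n * x)) * hn
  rw [← one_mul (exp (-x))]
  refine ((tendsto_mul_one_sub_Phi_div_stdphi.comp hu).mul hdens).congr' ?_
  filter_upwards [hu.eventually_gt_atTop 0] with n hun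
  have := (stdphi_pos (a n * x + b n)).ne'
  simp only [Function.comp_apply]
  field_simp

/-- Classical Gumbel domain-of-attraction result for the standard normal:
with b_n = Φ^{-1}(1 - 1/n) and a_n = 1/(n φ(b_n)),
[Φ(a_n x + b_n)]^n → exp(-e^{-x}). -/
theorem stmt3 (x : ℝ) :
    Filter.Tendsto (fun n : ℕ =>
      (Phi ((1 / (n * stdphi (PhiInv (1 - 1 / n)))) * x + PhiInv (1 - 1 / n))) ^ n)
      Filter.atTop (nhds (Real.exp (-Real.exp (-x)))) := by
  set b : ℕ → ℝ := fun n => PhiInv (1 - 1 / n)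
  have hPhi_b : ∀ᶠ n : ℕ in atTop, Phi (b n) = 1 - 1 / n := by
    filter_upwards [eventually_ge_atTop 2] with n hn
    have hn' : (2 : ℝ) ≤ n := by exact_mod_cast hn
    exact Phi_PhiInv (by rw [sub_pos, div_lt_one] <;> linarith)
      (sub_lt_self _ (by positivity))
  have hb : Tendsto b atTop atTop := by
    refine tendsto_atTop_of_tendsto_Phi (Tendsto.congr' (hPhi_b.mono fun _ h => h.symm) ?_)
    simpa using tendsto_one_div_atTop_nhds_zero_nat.const_sub (1 : ℝ)
  have hab : Tendsto (fun n : ℕ => b n * (1 / (n * stdphi (b n)))) atTop (𝓝 1) := by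
    refine (tendsto_mul_one_sub_Phi_div_stdphi.comp hb).congr' ?_
    filter_upwards [hPhi_b] with n hn
    rw [Function.comp_apply, hn]
    ring
  have hnorm : ∀ᶠ n : ℕ in atTop, n * stdphi (b n) * (1 / (n * stdphi (b n))) = 1 := by
    filter_upwards [eventually_ne_atTop 0] with n hn
    have := (stdphi_pos (b n)).ne'
    field_simp
  have htail := (tendsto_nat_mul_one_sub_Phi_affine x hb hab hnorm).neg
  have hpow := Real.tendsto_one_add_pow_exp_of_tendsto
    (g := fun n : ℕ => Phi (1 / (n * stdphi (b n)) * x + b n) - 1) (htail.congr fun n => by ring)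
  simp only [add_sub_cancel] at hpow
  exact hpow
end

section
/- For any distribution F with finite right endpoint x₀ = sup{x : F(x) < 1} < ∞ and density f, if lim_{x→x₀⁻} (x₀ - x) f(x)/(1 - F(x)) = τ for some τ > 0, then with a_n = x₀ - F^{-1}(1 - 1/n) the maximum M_n of n i.i.d. samples satisfies lim_{n→∞} P((M_n - x₀)/a_n ≤ x) = exp(-(-x)^τ) for x ≤ 0. -/
open MeasureTheory ProbabilityTheory Filter Real Set Topology

/-! Write `φ a = 1 - F (x₀ - a)` for the tail at distance `a` below `x₀`. On `(x₀ - b, x₀ - a]` the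
von Mises condition pins the density between `(τ ∓ ε) φ / (x₀ - u)`, which compares `φ b / φ a`
with `(b / a) ^ c` for every `c ≠ τ` as long as `b / a` is close to `1`. Chaining these comparisons,
`φ a / a ^ c` increases near `0` for `c < τ` and `a ^ c / φ a` increases for `c > τ`; hence
`φ (l a) / φ a → l ^ τ`, i.e. `φ` varies regularly with index `τ`. As `φ aₙ = 1 / n`, this gives
`n φ (-x aₙ) → (-x) ^ τ`, and the maximum of `n` i.i.d. samples lies below `x₀ + x aₙ` with
probability `(1 - φ (-x aₙ)) ^ n → exp (-(-x) ^ τ)`. -/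

theorem HasDerivAt.eventually_nhdsGT_lt {g₁ g₂ : ℝ → ℝ} {d₁ d₂ x : ℝ}
    (h₁ : HasDerivAt g₁ d₁ x) (h₂ : HasDerivAt g₂ d₂ x) (heq : g₁ x = g₂ x) (hd : d₁ < d₂) :
    ∀ᶠ y in 𝓝[>] x, g₁ y < g₂ y := by
  have hslope := hasDerivAt_iff_tendsto_slope.1 (h₂.sub h₁)
  filter_upwards [nhdsGT_le_nhdsNE x (hslope.eventually (eventually_gt_nhds (sub_pos.2 hd))),
    self_mem_nhdsWithin] with y hy hxy
  simpa [heq] using (slope_pos_iff hxy).1 hy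

theorem eventually_rpow_le_one_add_mul_one_sub_inv {c α : ℝ} (hcα : c < α) :
    ∀ᶠ r in 𝓝[>] 1, r ^ c ≤ 1 + α * (1 - r⁻¹) := by
  have h₁ := Real.hasDerivAt_rpow_const (x := 1) (p := c) (Or.inl one_ne_zero)
  have h₂ := (((hasDerivAt_inv one_ne_zero).const_sub 1).const_mul α).const_add 1
  filter_upwards [h₁.eventually_nhdsGT_lt h₂ (by simp) (by simpa using hcα)] with r hr
  exact hr.le

theorem eventually_one_lt_rpow_mul_one_sub_mul_sub_one {β c : ℝ} (hβc : β < c) :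
    ∀ᶠ r in 𝓝[>] 1, 1 < r ^ c * (1 - β * (r - 1)) := by
  have h₁ := Real.hasDerivAt_rpow_const (x := 1) (p := c) (Or.inl one_ne_zero)
  have h₂ := h₁.mul ((((hasDerivAt_id (1 : ℝ)).sub_const 1).const_mul β).const_sub 1)
  exact (hasDerivAt_const (1 : ℝ) (1 : ℝ)).eventually_nhdsGT_lt h₂ (by simp) (by simpa using hβc)

theorem monotoneOn_Ioc_of_forall_le_const_mul {g : ℝ → ℝ} {δ l₀ : ℝ} (hl₀ : 1 < l₀)
    (hg : ∀ a b, 0 < a → a < b → b ≤ δ → b ≤ l₀ * a → g a ≤ g b) :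
    MonotoneOn g (Ioc 0 δ) := by
  rintro a ⟨ha, -⟩ b ⟨-, hbδ⟩ hab
  suffices ∀ n : ℕ, ∀ b, a ≤ b → b ≤ δ → b ≤ l₀ ^ n * a → g a ≤ g b by
    obtain ⟨n, hn⟩ := pow_unbounded_of_one_lt (b / a) hl₀
    exact this n b hab hbδ ((div_le_iff₀ ha).1 hn.le)
  intro n
  induction n with
  | zero =>
    intro b hab _ hb
    rw [le_antisymm (by simpa using hb) hab]
  | succ n ih =>
    intro b hab hbδ hb
    rcases hab.eq_or_lt with rfl | hab
    · exact le_rfl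
    by_cases hbl : b ≤ l₀ * a
    · exact hg a b ha hab hbδ hbl
    have hl₀' : 0 < l₀ := one_pos.trans hl₀
    have hm : a ≤ b / l₀ := (le_div_iff₀ hl₀').2 (by linarith)
    have hbn : b / l₀ ≤ l₀ ^ n * a := (div_le_iff₀ hl₀').2 (by rw [pow_succ] at hb; linarith)
    exact (ih (b / l₀) hm ((div_le_self (by linarith) hl₀.le).trans hbδ) hbn).trans
      (hg _ b (ha.trans_le hm) (div_lt_self (by linarith) hl₀) hbδ
        (mul_div_cancel₀ b hl₀'.ne').ge)

section Density

variable {μ : Measure ℝ} {f : ℝ → ℝ} {s t : ℝ}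

theorem measureReal_Ioi_sub_measureReal_Ioi [IsFiniteMeasure μ] (hst : s ≤ t) :
    μ.real (Ioi s) - μ.real (Ioi t) = μ.real (Ioc s t) := by
  rw [← Ioc_union_Ioi_eq_Ioi hst, measureReal_union Ioc_disjoint_Ioi_same measurableSet_Ioi,
    add_sub_cancel_right]

theorem mul_sub_le_measureReal_Ioc [IsFiniteMeasure μ]
    (hμ : μ = volume.withDensity fun u => ENNReal.ofReal (f u)) {A : ℝ} (hA : 0 ≤ A)
    (hf : ∀ u ∈ Ioc s t, A ≤ f u) : A * (t - s) ≤ μ.real (Ioc s t) := by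
  refine (ENNReal.ofReal_le_iff_le_toReal (measure_ne_top μ _)).1 ?_
  rw [ENNReal.ofReal_mul hA, ← Real.volume_Ioc, ← setLIntegral_const, hμ,
    withDensity_apply _ measurableSet_Ioc]
  exact setLIntegral_mono' measurableSet_Ioc fun u hu => ENNReal.ofReal_le_ofReal (hf u hu)

theorem measureReal_Ioc_le_mul_sub
    (hμ : μ = volume.withDensity fun u => ENNReal.ofReal (f u)) {B : ℝ} (hst : s ≤ t)
    (hB : 0 ≤ B) (hf : ∀ u ∈ Ioc s t, f u ≤ B) : μ.real (Ioc s t) ≤ B * (t - s) := by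
  refine ENNReal.toReal_le_of_le_ofReal (mul_nonneg hB (sub_nonneg.2 hst)) ?_
  rw [ENNReal.ofReal_mul hB, ← Real.volume_Ioc, ← setLIntegral_const, hμ,
    withDensity_apply _ measurableSet_Ioc]
  exact setLIntegral_mono measurable_const fun u hu => ENNReal.ofReal_le_ofReal (hf u hu)

end Density

theorem tendsto_comp_mul_div_of_one_le {φ : ℝ → ℝ} {τ : ℝ}
    (h : ∀ l, 1 ≤ l → Tendsto (fun a => φ (l * a) / φ a) (𝓝[>] 0) (𝓝 (l ^ τ)))
    {l : ℝ} (hl : 0 < l) : Tendsto (fun a => φ (l * a) / φ a) (𝓝[>] 0) (𝓝 (l ^ τ)) := by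
  rcases le_or_gt 1 l with h1 | h1
  · exact h l h1
  have hmul : Tendsto (l * ·) (𝓝[>] 0) (𝓝[>] 0) :=
    tendsto_iff_comap.2 (comap_mulLeft_nhdsGT_zero hl).ge
  have hinv := ((h l⁻¹ ((one_le_inv₀ hl).2 h1.le)).comp hmul).inv₀
    (rpow_pos_of_pos (inv_pos.2 hl) τ).ne'
  rw [inv_rpow hl.le, inv_inv] at hinv
  refine hinv.congr fun a => ?_
  simp [inv_mul_cancel_left₀ hl.ne']

section VonMises

variable {μ : Measure ℝ} [IsFiniteMeasure μ] {f : ℝ → ℝ} {x₀ τ : ℝ}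

/-- A vanishing tail would make the quotient `0`, so its limit `τ > 0` forces the tail to be
positive below `x₀`. -/
theorem measureReal_Ioi_pos_of_tendsto
    (hvm : Tendsto (fun t => (x₀ - t) * f t / μ.real (Ioi t)) (𝓝[<] x₀) (𝓝 τ)) (hτ : 0 < τ)
    {u : ℝ} (hu : u < x₀) : 0 < μ.real (Ioi u) := by
  obtain ⟨v, hv, huv⟩ := ((hvm.eventually (eventually_gt_nhds hτ)).and (Ioo_mem_nhdsLT hu)).exists
  have hv : μ.real (Ioi v) ≠ 0 := fun h => by simp [h] at hv
  exact (measureReal_nonneg.lt_of_ne' hv).trans_le (measureReal_mono (Ioi_subset_Ioi huv.1.le))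

theorem exists_monotoneOn_measureReal_Ioi_div_rpow
    (hμ : μ = volume.withDensity fun u => ENNReal.ofReal (f u))
    (hvm : Tendsto (fun t => (x₀ - t) * f t / μ.real (Ioi t)) (𝓝[<] x₀) (𝓝 τ))
    {c : ℝ} (hc : 0 < c) (hcτ : c < τ) :
    ∃ δ > 0, MonotoneOn (fun a => μ.real (Ioi (x₀ - a)) / a ^ c) (Ioc 0 δ) := by
  have hT : ∀ u < x₀, 0 < μ.real (Ioi u) := fun _ =>
    measureReal_Ioi_pos_of_tendsto hvm (hc.trans hcτ)
  obtain ⟨α, hcα, hατ⟩ := exists_between hcτ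
  have hα₀ : 0 < α := hc.trans hcα
  obtain ⟨l₀, hl₀, hr⟩ :=
    mem_nhdsGT_iff_exists_Ioc_subset.1 (eventually_rpow_le_one_add_mul_one_sub_inv hcα)
  obtain ⟨u₀, hu₀, hα⟩ :=
    mem_nhdsLT_iff_exists_Ioo_subset.1 (hvm.eventually (eventually_gt_nhds hατ))
  refine ⟨x₀ - u₀, sub_pos.2 hu₀,
    monotoneOn_Ioc_of_forall_le_const_mul hl₀ fun a b ha hab hbδ hbl => ?_⟩
  have hb : 0 < b := ha.trans hab
  have hTa := hT (x₀ - a) (by linarith)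
  have hdens : ∀ u ∈ Ioc (x₀ - b) (x₀ - a), α * μ.real (Ioi (x₀ - a)) / b ≤ f u := by
    rintro u ⟨hbu, hua⟩
    have hu : α * μ.real (Ioi u) < (x₀ - u) * f u :=
      (lt_div_iff₀ (hT u (by linarith))).1 (hα ⟨by linarith, by linarith⟩)
    have hTu : μ.real (Ioi (x₀ - a)) ≤ μ.real (Ioi u) := measureReal_mono (Ioi_subset_Ioi hua)
    have hfu : 0 < f u := pos_of_mul_pos_right ((mul_pos hα₀ (hT u (by linarith))).trans hu)
      (by linarith)
    rw [div_le_iff₀ hb]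
    calc α * μ.real (Ioi (x₀ - a)) ≤ α * μ.real (Ioi u) := by gcongr
      _ ≤ (x₀ - u) * f u := hu.le
      _ ≤ f u * b := by nlinarith
  have hinc := mul_sub_le_measureReal_Ioc hμ (by positivity) hdens
  rw [← measureReal_Ioi_sub_measureReal_Ioi (by linarith)] at hinc
  have hrb := hr ⟨(one_lt_div ha).2 hab, (div_le_iff₀ ha).2 (by linarith)⟩
  show μ.real (Ioi (x₀ - a)) / a ^ c ≤ μ.real (Ioi (x₀ - b)) / b ^ c
  rw [div_le_div_iff₀ (by positivity) (by positivity)]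
  calc μ.real (Ioi (x₀ - a)) * b ^ c = μ.real (Ioi (x₀ - a)) * (b / a) ^ c * a ^ c := by
        rw [div_rpow hb.le ha.le]; field_simp
    _ ≤ μ.real (Ioi (x₀ - a)) * (1 + α * (1 - (b / a)⁻¹)) * a ^ c := by gcongr; exact hrb
    _ ≤ μ.real (Ioi (x₀ - b)) * a ^ c := by
        gcongr
        calc μ.real (Ioi (x₀ - a)) * (1 + α * (1 - (b / a)⁻¹))
            = μ.real (Ioi (x₀ - a)) + α * μ.real (Ioi (x₀ - a)) / b * (x₀ - a - (x₀ - b)) := by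
              field_simp; ring
          _ ≤ μ.real (Ioi (x₀ - b)) := by linarith

theorem exists_monotoneOn_rpow_div_measureReal_Ioi
    (hμ : μ = volume.withDensity fun u => ENNReal.ofReal (f u))
    (hvm : Tendsto (fun t => (x₀ - t) * f t / μ.real (Ioi t)) (𝓝[<] x₀) (𝓝 τ))
    (hτ : 0 < τ) {c : ℝ} (hτc : τ < c) :
    ∃ δ > 0, MonotoneOn (fun a => a ^ c / μ.real (Ioi (x₀ - a))) (Ioc 0 δ) := by
  have hT : ∀ u < x₀, 0 < μ.real (Ioi u) := fun _ => measureReal_Ioi_pos_of_tendsto hvm hτ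
  obtain ⟨β, hτβ, hβc⟩ := exists_between hτc
  have hβ₀ : 0 < β := hτ.trans hτβ
  obtain ⟨l₀, hl₀, hr⟩ :=
    mem_nhdsGT_iff_exists_Ioc_subset.1 (eventually_one_lt_rpow_mul_one_sub_mul_sub_one hβc)
  obtain ⟨u₀, hu₀, hβ⟩ :=
    mem_nhdsLT_iff_exists_Ioo_subset.1 (hvm.eventually (eventually_lt_nhds hτβ))
  refine ⟨x₀ - u₀, sub_pos.2 hu₀,
    monotoneOn_Ioc_of_forall_le_const_mul hl₀ fun a b ha hab hbδ hbl => ?_⟩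
  have hb : 0 < b := ha.trans hab
  have hTa := hT (x₀ - a) (by linarith)
  have hTb := hT (x₀ - b) (by linarith)
  have hdens : ∀ u ∈ Ioc (x₀ - b) (x₀ - a), f u ≤ β * μ.real (Ioi (x₀ - b)) / a := by
    rintro u ⟨hbu, hua⟩
    have hu : (x₀ - u) * f u < β * μ.real (Ioi u) :=
      (div_lt_iff₀ (hT u (by linarith))).1 (hβ ⟨by linarith, by linarith⟩)
    have hTu : μ.real (Ioi u) ≤ μ.real (Ioi (x₀ - b)) := measureReal_mono (Ioi_subset_Ioi hbu.le)
    rw [le_div_iff₀ ha]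
    rcases le_or_gt (f u) 0 with hfu | hfu
    · nlinarith
    calc f u * a ≤ (x₀ - u) * f u := by nlinarith
      _ ≤ β * μ.real (Ioi u) := hu.le
      _ ≤ β * μ.real (Ioi (x₀ - b)) := by gcongr
  have hinc := measureReal_Ioc_le_mul_sub hμ (by linarith) (by positivity) hdens
  rw [← measureReal_Ioi_sub_measureReal_Ioi (by linarith)] at hinc
  have hrb := hr ⟨(one_lt_div ha).2 hab, (div_le_iff₀ ha).2 (by linarith)⟩
  show a ^ c / μ.real (Ioi (x₀ - a)) ≤ b ^ c / μ.real (Ioi (x₀ - b))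
  rw [div_le_div_iff₀ hTa hTb]
  calc a ^ c * μ.real (Ioi (x₀ - b))
      ≤ a ^ c * ((b / a) ^ c * (1 - β * (b / a - 1)) * μ.real (Ioi (x₀ - b))) := by
        gcongr; exact le_mul_of_one_le_left hTb.le (le_of_lt hrb)
    _ = b ^ c *
        (μ.real (Ioi (x₀ - b)) - β * μ.real (Ioi (x₀ - b)) / a * (x₀ - a - (x₀ - b))) := by
        rw [div_rpow hb.le ha.le]; field_simp; ring
    _ ≤ b ^ c * μ.real (Ioi (x₀ - a)) := by gcongr; linarith

theorem tendsto_measureReal_Ioi_div_of_one_le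
    (hμ : μ = volume.withDensity fun u => ENNReal.ofReal (f u))
    (hvm : Tendsto (fun t => (x₀ - t) * f t / μ.real (Ioi t)) (𝓝[<] x₀) (𝓝 τ))
    (hτ : 0 < τ) {l : ℝ} (hl : 1 ≤ l) :
    Tendsto (fun a => μ.real (Ioi (x₀ - l * a)) / μ.real (Ioi (x₀ - a))) (𝓝[>] 0) (𝓝 (l ^ τ)) := by
  have hl₀ : 0 < l := one_pos.trans_le hl
  have hT : ∀ a > 0, 0 < μ.real (Ioi (x₀ - a)) := fun a ha =>
    measureReal_Ioi_pos_of_tendsto hvm hτ (by linarith)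
  have hpow : Tendsto (fun c => l ^ c) (𝓝 τ) (𝓝 (l ^ τ)) :=
    (continuousAt_const_rpow hl₀.ne').tendsto
  have hsmall : ∀ δ > 0, ∀ᶠ a in 𝓝[>] 0, a ∈ Ioc 0 δ ∧ l * a ∈ Ioc 0 δ ∧ a ≤ l * a := by
    intro δ hδ
    filter_upwards [Ioo_mem_nhdsGT (div_pos hδ hl₀)] with a ⟨ha, haδ⟩
    have hla : l * a ≤ δ := by rw [lt_div_iff₀ hl₀] at haδ; linarith
    exact ⟨⟨ha, (le_mul_of_one_le_left ha.le hl).trans hla⟩, ⟨by positivity, hla⟩,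
      le_mul_of_one_le_left ha.le hl⟩
  refine tendsto_order.2 ⟨fun y hy => ?_, fun y hy => ?_⟩
  · obtain ⟨c, hyc, hc⟩ := (((hpow.mono_left nhdsWithin_le_nhds).eventually
      (eventually_gt_nhds hy)).and (Ioo_mem_nhdsLT hτ)).exists
    obtain ⟨δ, hδ, hmono⟩ := exists_monotoneOn_measureReal_Ioi_div_rpow hμ hvm hc.1 hc.2
    filter_upwards [hsmall δ hδ] with a ⟨ha, hla, hale⟩
    have key := hmono ha hla hale
    simp only at key
    rw [div_le_div_iff₀ (rpow_pos_of_pos ha.1 c) (rpow_pos_of_pos hla.1 c),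
      mul_rpow hl₀.le ha.1.le] at key
    refine hyc.trans_le ((le_div_iff₀ (hT a ha.1)).2 ?_)
    nlinarith [rpow_pos_of_pos ha.1 c]
  · obtain ⟨c, hyc, hc⟩ := (((hpow.mono_left nhdsWithin_le_nhds).eventually
      (eventually_lt_nhds hy)).and (Ioo_mem_nhdsGT (lt_add_one τ))).exists
    obtain ⟨δ, hδ, hmono⟩ := exists_monotoneOn_rpow_div_measureReal_Ioi hμ hvm hτ hc.1
    filter_upwards [hsmall δ hδ] with a ⟨ha, hla, hale⟩
    have key := hmono ha hla hale
    simp only at key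
    rw [div_le_div_iff₀ (hT a ha.1) (hT _ hla.1), mul_rpow hl₀.le ha.1.le] at key
    refine ((div_le_iff₀ (hT a ha.1)).2 ?_).trans_lt hyc
    nlinarith [rpow_pos_of_pos ha.1 c]

theorem tendsto_measureReal_Ioi_div
    (hμ : μ = volume.withDensity fun u => ENNReal.ofReal (f u))
    (hvm : Tendsto (fun t => (x₀ - t) * f t / μ.real (Ioi t)) (𝓝[<] x₀) (𝓝 τ))
    (hτ : 0 < τ) {l : ℝ} (hl : 0 < l) :
    Tendsto (fun a => μ.real (Ioi (x₀ - l * a)) / μ.real (Ioi (x₀ - a))) (𝓝[>] 0) (𝓝 (l ^ τ)) :=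
  tendsto_comp_mul_div_of_one_le (φ := fun a => μ.real (Ioi (x₀ - a)))
    (fun _ => tendsto_measureReal_Ioi_div_of_one_le hμ hvm hτ) hl

theorem tendsto_nat_mul_measureReal_Ioi
    (hμ : μ = volume.withDensity fun u => ENNReal.ofReal (f u))
    (hvm : Tendsto (fun t => (x₀ - t) * f t / μ.real (Ioi t)) (𝓝[<] x₀) (𝓝 τ)) (hτ : 0 < τ)
    (hx₀ : μ.real (Ioi x₀) = 0) {q : ℕ → ℝ} (hq : ∀ n : ℕ, 2 ≤ n → μ.real (Ioi (q n)) = 1 / n)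
    (hqx : Tendsto (fun n => x₀ - q n) atTop (𝓝[>] 0)) {l : ℝ} (hl : 0 ≤ l) :
    Tendsto (fun n : ℕ => n * μ.real (Ioi (x₀ - l * (x₀ - q n)))) atTop (𝓝 (l ^ τ)) := by
  rcases hl.eq_or_lt with rfl | hl
  · simp [hx₀, zero_rpow hτ.ne']
  refine ((tendsto_measureReal_Ioi_div hμ hvm hτ hl).comp hqx).congr' ?_
  filter_upwards [eventually_ge_atTop 2] with n hn
  simp [hq n hn, div_eq_mul_inv, mul_comm]

end VonMises

theorem measureReal_Ioi_eq_zero_of_isLUB {μ : Measure ℝ} [IsProbabilityMeasure μ] {x₀ : ℝ}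
    (h : IsLUB {t | μ.real (Iic t) < 1} x₀) : μ.real (Ioi x₀) = 0 := by
  have hcdf : cdf μ =ᶠ[𝓝[>] x₀] fun _ => 1 := by
    filter_upwards [self_mem_nhdsWithin] with t ht
    rw [cdf_eq_real]
    by_contra hne
    exact (not_le.2 ht) (h.1 (measureReal_le_one.lt_of_ne hne))
  have hx₀ : cdf μ x₀ = 1 := tendsto_nhds_unique
    (((cdf μ).right_continuous x₀).mono Ioi_subset_Ici_self) (tendsto_const_nhds.congr' hcdf.symm)
  rw [← compl_Iic, probReal_compl_eq_one_sub measurableSet_Iic, ← cdf_eq_real, hx₀, sub_self]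

theorem tendsto_sub_nhdsGT_zero_of_measureReal_Ioi_eq {μ : Measure ℝ} [IsFiniteMeasure μ]
    {x₀ : ℝ} {q : ℕ → ℝ} (hpos : ∀ t < x₀, 0 < μ.real (Ioi t)) (hx₀ : μ.real (Ioi x₀) = 0)
    (hq : ∀ n : ℕ, 2 ≤ n → μ.real (Ioi (q n)) = 1 / n) :
    Tendsto (fun n => x₀ - q n) atTop (𝓝[>] 0) := by
  have hq_lt : ∀ᶠ n : ℕ in atTop, q n < x₀ := by
    filter_upwards [eventually_ge_atTop 2] with n hn
    by_contra! hle
    have : μ.real (Ioi (q n)) ≤ 0 := hx₀ ▸ measureReal_mono (Ioi_subset_Ioi hle)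
    rw [hq n hn] at this
    have : (0 : ℝ) < 1 / n := by positivity
    linarith
  refine tendsto_nhdsWithin_iff.2 ⟨tendsto_order.2 ⟨fun y hy => ?_, fun ε hε => ?_⟩, ?_⟩
  · filter_upwards [hq_lt] with n hn
    linarith
  · have hε' := hpos (x₀ - ε) (by linarith)
    filter_upwards [eventually_ge_atTop 2,
      tendsto_one_div_atTop_nhds_zero_nat.eventually (eventually_lt_nhds hε')] with n hn hnε
    by_contra! hle
    have := measureReal_mono (μ := μ) (Ioi_subset_Ioi (show q n ≤ x₀ - ε by linarith))
    rw [hq n hn] at this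
    linarith
  · filter_upwards [hq_lt] with n hn
    exact sub_pos.2 hn

theorem iIndepFun.measure_forall_lt_le_eq_pow {Ω : Type*} [MeasurableSpace Ω] {P : Measure Ω}
    {μ : Measure ℝ} {Y : ℕ → Ω → ℝ} (hmeas : ∀ i, Measurable (Y i)) (hindep : iIndepFun Y P)
    (hlaw : ∀ i, P.map (Y i) = μ) (n : ℕ) (c : ℝ) :
    P {ω | ∀ i < n, Y i ω ≤ c} = μ (Iic c) ^ n := by
  have hset : {ω | ∀ i < n, Y i ω ≤ c} = ⋂ i ∈ Finset.range n, Y i ⁻¹' Iic c := by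
    ext ω; simp
  rw [hset, hindep.meas_biInter fun i _ => ⟨Iic c, measurableSet_Iic, rfl⟩]
  simp_rw [← Measure.map_apply (hmeas _) measurableSet_Iic, hlaw]
  simp

theorem stmt10_general {Ω : Type*} [MeasureSpace Ω]
    (μ : Measure ℝ) [IsProbabilityMeasure μ] (f : ℝ → ℝ)
    (hdens : μ = volume.withDensity (fun t => ENNReal.ofReal (f t)))
    (F : ℝ → ℝ) (hF : F = fun t => (μ (Set.Iic t)).toReal)
    (x₀ : ℝ) (hx₀ : IsLUB {t | F t < 1} x₀)
    (τ : ℝ) (hτ : 0 < τ)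
    (hvm : Filter.Tendsto (fun t => (x₀ - t) * f t / (1 - F t))
      (nhdsWithin x₀ (Set.Iio x₀)) (nhds τ))
    (q : ℕ → ℝ) (hq : ∀ n : ℕ, 2 ≤ n → F (q n) = 1 - 1 / n)
    (Y : ℕ → Ω → ℝ) (hmeas : ∀ i, Measurable (Y i))
    (hindep : iIndepFun Y ℙ)
    (hlaw : ∀ i, Measure.map (Y i) ℙ = μ)
    (x : ℝ) (hx : x ≤ 0) :
    Filter.Tendsto (fun n : ℕ =>
      (ℙ {ω | ∀ i < n, (Y i ω - x₀) / (x₀ - q n) ≤ x}).toReal)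
      Filter.atTop (nhds (Real.exp (-(-x) ^ τ))) := by
  have hF_tail : ∀ t, 1 - F t = μ.real (Ioi t) := fun t => by
    rw [hF, ← compl_Iic, probReal_compl_eq_one_sub measurableSet_Iic, measureReal_def]
  simp only [hF_tail] at hvm
  have hq' : ∀ n : ℕ, 2 ≤ n → μ.real (Ioi (q n)) = 1 / n := fun n hn => by
    rw [← hF_tail, hq n hn, sub_sub_cancel]
  have hx₀' : μ.real (Ioi x₀) = 0 := measureReal_Ioi_eq_zero_of_isLUB (by subst hF; exact hx₀)
  have hqx := tendsto_sub_nhdsGT_zero_of_measureReal_Ioi_eq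
    (fun _ => measureReal_Ioi_pos_of_tendsto hvm hτ) hx₀' hq'
  have hlim : Tendsto (fun n : ℕ => n * -μ.real (Ioi (x₀ - -x * (x₀ - q n)))) atTop
      (𝓝 (-(-x) ^ τ)) := by
    simpa only [mul_neg] using
      (tendsto_nat_mul_measureReal_Ioi hdens hvm hτ hx₀' hq' hqx (neg_nonneg.2 hx)).neg
  refine (tendsto_one_add_pow_exp_of_tendsto hlim).congr' ?_
  filter_upwards [hqx.eventually self_mem_nhdsWithin] with n (hn : 0 < x₀ - q n)
  simp_rw [div_le_iff₀ hn, sub_le_iff_le_add]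
  rw [iIndepFun.measure_forall_lt_le_eq_pow hmeas hindep hlaw, ENNReal.toReal_pow,
    ← measureReal_def, ← compl_Iic, probReal_compl_eq_one_sub measurableSet_Iic,
    show x₀ - -x * (x₀ - q n) = x * (x₀ - q n) + x₀ by ring]
  ring

/-- von Mises sufficient condition for the reverse Weibull max-domain of attraction:
if F has density f, finite right endpoint x₀, and (x₀-x) f(x)/(1-F(x)) → τ > 0 as
x → x₀⁻, then with a_n = x₀ - F⁻¹(1-1/n), P((M_n - x₀)/a_n ≤ x) → exp(-(-x)^τ)
for x ≤ 0, where M_n is the maximum of n i.i.d. samples from F. -/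
theorem stmt10 {Ω : Type*} [MeasureSpace Ω] [IsProbabilityMeasure (ℙ : Measure Ω)]
    (μ : Measure ℝ) [IsProbabilityMeasure μ] (f : ℝ → ℝ)
    (hdens : μ = volume.withDensity (fun t => ENNReal.ofReal (f t)))
    (F : ℝ → ℝ) (hF : F = fun t => (μ (Set.Iic t)).toReal)
    (x₀ : ℝ) (hx₀ : IsLUB {t | F t < 1} x₀)
    (τ : ℝ) (hτ : 0 < τ)
    (hvm : Filter.Tendsto (fun t => (x₀ - t) * f t / (1 - F t))
      (nhdsWithin x₀ (Set.Iio x₀)) (nhds τ))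
    (q : ℕ → ℝ) (hq : ∀ n : ℕ, 2 ≤ n → F (q n) = 1 - 1 / n)
    (Y : ℕ → Ω → ℝ) (hmeas : ∀ i, Measurable (Y i))
    (hindep : iIndepFun Y ℙ)
    (hlaw : ∀ i, Measure.map (Y i) ℙ = μ)
    (x : ℝ) (hx : x ≤ 0) :
    Filter.Tendsto (fun n : ℕ =>
      (ℙ {ω | ∀ i < n, (Y i ω - x₀) / (x₀ - q n) ≤ x}).toReal)
      Filter.atTop (nhds (Real.exp (-(-x) ^ τ))) :=
  stmt10_general μ f hdens F hF x₀ hx₀ τ hτ hvm q hq Y hmeas hindep hlaw x hx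
end
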